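/- arXiv:math/0108093 — 2 statements merged into one kernel-verified Lean document; each statement's English description precedes it below -/
import Mathlib

section
/- Let 0 ≤ τ ≤ ∞ and let m ≥ 1 be an integer. Let P(λ, t̃; x) be a complex-valued function of class C^τ on a neighborhood of 0 in ℂ × ℂ^n × ℝ^h, holomorphic in (λ, t̃) for each fixed x. Then there exist r > 0 and ε > 0 such that the function c₀(t; x) := (2πi)^{-1} ∮_{|λ|=r} P(λ, t/λ^m; x) λ^{-1} dλ, defined for |t| < ε and x in a neighborhood of 0, is of class C^τ jointly in (t, x) and holomorphic in t for each fixed x. (Here c₀ is the coefficient of λ^0 in the Laurent series expansion of λ ↦ P(λ, t/λ^m; x): if P(λ, t̃; x) = Σ_{ν,α} P_{ν,α}(x) λ^ν t̃^α, then c₀(t; x) = Σ_{ν=|α|m} P_{ν,α}(x) t^α.) -/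
/-!
Choose `δ > 0` with the closed `δ`-ball about `0` inside the domain of `P` and integrate over
`|λ| = δ`: for `|t| < δ^{m+1}` and `|x| < δ` the point `(λ, t/λ^m, x)` stays in that ball, since
`|t/λ^m| = |t|/δ^m < δ`. Parametrising the circle turns `c₀` into an integral over `[0, 2π]` of a
function that is `C^τ` in `(θ, t, x)` and holomorphic in `t`. Differentiating under the integral
sign, with bounds coming from compactness of `[0, 2π] × (closed ball)`, shows that such integrals
inherit `C^τ` regularity; for holomorphy in `t`, Cauchy's estimate bounds the complex derivatives
of the integrand uniformly.
-/

open Topology Metric MeasureTheory Set intervalIntegral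
open scoped Interval

universe u

section ParametricIntegral

-- `E` and `G` share a universe so that the induction on the order can pass from `G` to `E →L[ℝ] G`.
variable {E G : Type u} [NormedAddCommGroup E] [ProperSpace E] [NormedAddCommGroup G]
  [NormedSpace ℝ G] {U : Set E} {F : ℝ × E → G} {a b : ℝ}

theorem continuousOn_intervalIntegral_of_continuousOn_prod (hU : IsOpen U)
    (hF : ContinuousOn F (univ ×ˢ U)) : ContinuousOn (fun q => ∫ θ in a..b, F (θ, q)) U := by
  intro q₀ hq₀
  obtain ⟨ρ, hρ, hρU⟩ := nhds_basis_closedBall.mem_iff.1 (hU.mem_nhds hq₀)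
  obtain ⟨M, hM⟩ := (isCompact_uIcc.prod (isCompact_closedBall q₀ ρ)).exists_bound_of_continuousOn
    (hF.mono (prod_mono (subset_univ _) hρU))
  refine (continuousAt_of_dominated_interval (bound := fun _ => M) ?_ ?_
    intervalIntegrable_const ?_).continuousWithinAt
  · filter_upwards [hU.mem_nhds hq₀] with q hq
    exact (hF.comp_continuous (by fun_prop) fun θ => ⟨trivial, hq⟩).aestronglyMeasurable
  · filter_upwards [closedBall_mem_nhds q₀ hρ] with q hq
    exact ae_of_all _ fun θ hθ => hM (θ, q) ⟨uIoc_subset_uIcc hθ, hq⟩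
  · exact ae_of_all _ fun θ _ =>
      (hF.continuousAt ((isOpen_univ.prod hU).mem_nhds ⟨trivial, hq₀⟩)).comp (by fun_prop)

variable [NormedSpace ℝ E]

theorem hasFDerivAt_intervalIntegral_of_contDiffOn_prod (hU : IsOpen U)
    (hF : ContDiffOn ℝ 1 F (univ ×ˢ U)) {q₀ : E} (hq₀ : q₀ ∈ U) :
    HasFDerivAt (fun q => ∫ θ in a..b, F (θ, q))
      (∫ θ in a..b, fderiv ℝ F (θ, q₀) ∘L ContinuousLinearMap.inr ℝ ℝ E) q₀ := by
  have hUo : IsOpen (univ ×ˢ U : Set (ℝ × E)) := isOpen_univ.prod hU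
  have hF' : ContinuousOn (fun p : ℝ × E => fderiv ℝ F p ∘L ContinuousLinearMap.inr ℝ ℝ E)
      (univ ×ˢ U) :=
    (hF.continuousOn_fderiv_of_isOpen hUo le_rfl).clm_comp continuousOn_const
  obtain ⟨ρ, hρ, hρU⟩ := nhds_basis_closedBall.mem_iff.1 (hU.mem_nhds hq₀)
  obtain ⟨M, hM⟩ := (isCompact_uIcc.prod (isCompact_closedBall q₀ ρ)).exists_bound_of_continuousOn
    (hF'.mono (prod_mono (subset_univ _) hρU))
  refine hasFDerivAt_integral_of_dominated_of_fderiv_le (bound := fun _ => M)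
    (F' := fun q θ => fderiv ℝ F (θ, q) ∘L ContinuousLinearMap.inr ℝ ℝ E)
    (ball_mem_nhds q₀ hρ) ?_ ?_ ?_ ?_ intervalIntegrable_const ?_
  · filter_upwards [hU.mem_nhds hq₀] with q hq
    exact (hF.continuousOn.comp_continuous (by fun_prop)
      fun θ => ⟨trivial, hq⟩).aestronglyMeasurable
  · exact (hF.continuousOn.comp_continuous (by fun_prop)
      fun θ => ⟨trivial, hq₀⟩).intervalIntegrable _ _
  · exact (hF'.comp_continuous (by fun_prop) fun θ => ⟨trivial, hq₀⟩).aestronglyMeasurable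
  · exact ae_of_all _ fun θ hθ q hq =>
      hM (θ, q) ⟨uIoc_subset_uIcc hθ, ball_subset_closedBall hq⟩
  · refine ae_of_all _ fun θ _ q hq => ?_
    have hθq : (θ, q) ∈ univ ×ˢ U := ⟨trivial, hρU (ball_subset_closedBall hq)⟩
    exact ((hF.differentiableOn one_ne_zero).differentiableAt (hUo.mem_nhds hθq)).hasFDerivAt.comp q
      (hasFDerivAt_prodMk_right θ q)

theorem contDiffOn_intervalIntegral_of_contDiffOn_prod_nat (hU : IsOpen U)
    {k : ℕ} (hF : ContDiffOn ℝ k F (univ ×ˢ U)) :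
    ContDiffOn ℝ k (fun q => ∫ θ in a..b, F (θ, q)) U := by
  induction k generalizing G with
  | zero => exact contDiffOn_zero.2 <|
      continuousOn_intervalIntegral_of_continuousOn_prod hU (contDiffOn_zero.1 hF)
  | succ k ih =>
    have hF1 : ContDiffOn ℝ 1 F (univ ×ˢ U) := hF.of_le (by exact_mod_cast Nat.le_add_left 1 k)
    rw [Nat.cast_succ, contDiffOn_succ_iff_fderiv_of_isOpen hU]
    refine ⟨fun q hq => (hasFDerivAt_intervalIntegral_of_contDiffOn_prod hU hF1 hq).differentiableAt
      |>.differentiableWithinAt, by simp, ?_⟩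
    refine (ih ((hF.fderiv_of_isOpen (isOpen_univ.prod hU) (by push_cast; rfl)).clm_comp
      (contDiffOn_const (c := ContinuousLinearMap.inr ℝ ℝ E)))).congr fun q hq => ?_
    exact (hasFDerivAt_intervalIntegral_of_contDiffOn_prod hU hF1 hq).fderiv

theorem contDiffOn_intervalIntegral_of_contDiffOn_prod (hU : IsOpen U)
    {n : ℕ∞} (hF : ContDiffOn ℝ n F (univ ×ˢ U)) :
    ContDiffOn ℝ n (fun q => ∫ θ in a..b, F (θ, q)) U :=
  contDiffOn_iff_forall_nat_le.2 fun k hk =>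
    contDiffOn_intervalIntegral_of_contDiffOn_prod_nat hU (hF.of_le (by exact_mod_cast hk))

end ParametricIntegral

section Holomorphic

variable {H E : Type*} [NormedAddCommGroup H] [NormedSpace ℂ H] [NormedAddCommGroup E]
  [NormedSpace ℂ E]

theorem norm_fderiv_le_of_forall_mem_closedBall_norm_le {f : H → E} {t : H} {R C : ℝ}
    (hR : 0 < R) (hd : ∀ s ∈ closedBall t R, DifferentiableAt ℂ f s)
    (hC : ∀ s ∈ closedBall t R, ‖f s‖ ≤ C) : ‖fderiv ℂ f t‖ ≤ C / R := by
  have hC0 : 0 ≤ C := (norm_nonneg _).trans (hC t (mem_closedBall_self hR.le))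
  refine ContinuousLinearMap.opNorm_le_bound _ (by positivity) fun v => ?_
  rcases eq_or_ne v 0 with rfl | hv
  · simp
  have hv' : 0 < ‖v‖ := norm_pos_iff.2 hv
  set line : ℂ → H := fun s => t + s • v
  have hline : ∀ s ∈ closedBall (0 : ℂ) (R / ‖v‖), line s ∈ closedBall t R := fun s hs => by
    rw [mem_closedBall, dist_eq_norm, add_sub_cancel_left, norm_smul]
    rw [mem_closedBall, dist_zero_right, le_div_iff₀ hv'] at hs
    exact hs
  have hderiv : HasDerivAt (f ∘ line) (fderiv ℂ f t v) 0 := by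
    have := ((hasDerivAt_id (0 : ℂ)).smul_const v).const_add t
    simp only [id, one_smul] at this
    exact (hd t (mem_closedBall_self hR.le)).hasFDerivAt.comp_hasDerivAt_of_eq 0 this
      (by simp [line])
  have hdiff : DiffContOnCl ℂ (f ∘ line) (ball 0 (R / ‖v‖)) :=
    DifferentiableOn.diffContOnCl <| by
      rw [closure_ball _ (div_pos hR hv').ne']
      exact fun s hs => ((hd _ (hline s hs)).comp s
        (by fun_prop : DifferentiableAt ℂ line s)).differentiableWithinAt
  calc ‖fderiv ℂ f t v‖ = ‖deriv (f ∘ line) 0‖ := by rw [hderiv.deriv]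
    _ ≤ C / (R / ‖v‖) := Complex.norm_deriv_le_of_forall_mem_sphere_norm_le (by positivity) hdiff
        fun s hs => hC _ (hline s (sphere_subset_closedBall hs))
    _ = C / R * ‖v‖ := by field_simp

variable [FiniteDimensional ℂ H] [FiniteDimensional ℂ E]

theorem stronglyMeasurable_fderiv_of_continuousOn_prod {F : ℝ × H → E} {s : Set H}
    (hs : IsClosed s) (hF : ContinuousOn F (univ ×ˢ s)) {t₀ : H} (ht₀ : s ∈ 𝓝 t₀) :
    StronglyMeasurable fun θ => fderiv ℂ (fun t => F (θ, t)) t₀ := by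
  -- A continuous extension of `F` to all of `ℝ × H` (Tietze) has the same derivatives at `t₀`.
  obtain ⟨G, hG⟩ := ContinuousMap.exists_restrict_eq (isClosed_univ.prod hs)
    ⟨_, hF.domRestrict⟩
  have hGF : ∀ p ∈ univ ×ˢ s, G p = F p := fun p hp => congr($hG ⟨p, hp⟩)
  have hderiv : ∀ θ, fderiv ℂ (fun t => F (θ, t)) t₀ = fderiv ℂ (fun t => G (θ, t)) t₀ :=
    fun θ => Filter.EventuallyEq.fderiv_eq <| Filter.eventually_of_mem ht₀ fun t ht =>
      (hGF (θ, t) ⟨trivial, ht⟩).symm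
  borelize H
  simp only [hderiv]
  exact ((measurable_fderiv_with_param ℂ (f := fun θ t => G (θ, t)) G.continuous).comp
    measurable_prodMk_right).stronglyMeasurable

theorem differentiableOn_intervalIntegral_of_continuousOn_prod {F : ℝ × H → E} {U : Set H}
    {a b : ℝ} (hU : IsOpen U) (hF : ContinuousOn F (univ ×ˢ U))
    (hhol : ∀ θ, DifferentiableOn ℂ (fun t => F (θ, t)) U) :
    DifferentiableOn ℂ (fun t => ∫ θ in a..b, F (θ, t)) U := by
  intro t₀ ht₀
  obtain ⟨ρ, hρ, hρU⟩ := nhds_basis_closedBall.mem_iff.1 (hU.mem_nhds ht₀)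
  have hρ2 : 0 < ρ / 2 := half_pos hρ
  have hFK : ContinuousOn F (univ ×ˢ closedBall t₀ ρ) := hF.mono (prod_mono subset_rfl hρU)
  obtain ⟨M, hM⟩ := ((isCompact_uIcc (a := a) (b := b)).prod
    (isCompact_closedBall t₀ ρ)).exists_bound_of_continuousOn
      (hFK.mono (prod_mono (subset_univ _) subset_rfl))
  have hdiff : ∀ θ, ∀ t ∈ U, DifferentiableAt ℂ (fun t => F (θ, t)) t := fun θ t ht =>
    (hhol θ).differentiableAt (hU.mem_nhds ht)
  have hbound : ∀ θ ∈ Ι a b, ∀ t ∈ ball t₀ (ρ / 2),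
      ‖fderiv ℂ (fun t => F (θ, t)) t‖ ≤ M / (ρ / 2) := fun θ hθ t ht => by
    have hsub : closedBall t (ρ / 2) ⊆ closedBall t₀ ρ := closedBall_subset_closedBall' (by
      rw [mem_ball] at ht; linarith)
    exact norm_fderiv_le_of_forall_mem_closedBall_norm_le hρ2
      (fun s hs => hdiff θ s (hρU (hsub hs)))
      fun s hs => hM (θ, s) ⟨uIoc_subset_uIcc hθ, hsub hs⟩
  have hslice : ∀ t ∈ U, Continuous fun θ => F (θ, t) := fun t ht =>
    hF.comp_continuous (by fun_prop) fun θ => ⟨trivial, ht⟩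
  refine (hasFDerivAt_integral_of_dominated_of_fderiv_le (bound := fun _ => M / (ρ / 2))
    (F' := fun t θ => fderiv ℂ (fun t => F (θ, t)) t) (ball_mem_nhds t₀ hρ2) ?_
    ((hslice t₀ ht₀).intervalIntegrable _ _) ?_ (ae_of_all _ hbound) intervalIntegrable_const
    ?_).differentiableAt.differentiableWithinAt
  · filter_upwards [hU.mem_nhds ht₀] with t ht
    exact (hslice t ht).aestronglyMeasurable
  · exact (stronglyMeasurable_fderiv_of_continuousOn_prod isClosed_closedBall hFK
      (closedBall_mem_nhds t₀ hρ)).aestronglyMeasurable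
  · exact ae_of_all _ fun θ _ t ht =>
      (hdiff θ t (hρU (closedBall_subset_closedBall (by linarith) (ball_subset_closedBall ht))))
        |>.hasFDerivAt

end Holomorphic

theorem contDiffOn_circleIntegral_of_contDiffOn_prod {E G : Type u} [NormedAddCommGroup E]
    [NormedSpace ℝ E] [ProperSpace E] [NormedAddCommGroup G] [NormedSpace ℂ G] {n : ℕ∞}
    (c : ℂ) (R : ℝ) {g : ℂ × E → G} {U : Set E} {V : Set (ℂ × E)} (hU : IsOpen U)
    (hg : ContDiffOn ℝ n g V) (hUV : sphere c |R| ×ˢ U ⊆ V) :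
    ContDiffOn ℝ n (fun q => ∮ z in C(c, R), g (z, q)) U := by
  have hderiv : ContDiff ℝ n (deriv (circleMap c R)) := by
    simp only [funext (deriv_circleMap c R)]
    exact (contDiff_circleMap 0 R).mul contDiff_const
  exact contDiffOn_intervalIntegral_of_contDiffOn_prod hU <|
    (hderiv.comp contDiff_fst).contDiffOn.smul <|
      hg.comp (((contDiff_circleMap c R).comp contDiff_fst).prodMk contDiff_snd).contDiffOn
        fun p hp => hUV ⟨circleMap_mem_sphere' c R p.1, hp.2⟩

theorem differentiableOn_circleIntegral_of_continuousOn_prod {H E : Type*} [NormedAddCommGroup H]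
    [NormedSpace ℂ H] [FiniteDimensional ℂ H] [NormedAddCommGroup E] [NormedSpace ℂ E]
    [FiniteDimensional ℂ E] (c : ℂ) (R : ℝ) {g : ℂ × H → E} {U : Set H} {V : Set (ℂ × H)}
    (hU : IsOpen U) (hg : ContinuousOn g V) (hUV : sphere c |R| ×ˢ U ⊆ V)
    (hhol : ∀ z ∈ sphere c |R|, DifferentiableOn ℂ (fun t => g (z, t)) U) :
    DifferentiableOn ℂ (fun t => ∮ z in C(c, R), g (z, t)) U := by
  have hderiv : Continuous (deriv (circleMap c R)) := by
    simp only [funext (deriv_circleMap c R)]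
    fun_prop
  refine differentiableOn_intervalIntegral_of_continuousOn_prod
    (F := fun p => deriv (circleMap c R) p.1 • g (circleMap c R p.1, p.2)) hU ?_
    fun θ => (hhol _ (circleMap_mem_sphere' c R θ)).fun_const_smul (deriv (circleMap c R) θ)
  exact (hderiv.comp continuous_fst).continuousOn.smul <|
    hg.comp (by fun_prop) fun p hp => hUV ⟨circleMap_mem_sphere' c R p.1, hp.2⟩

section LaurentSubstitution

variable {E X : Type*} [NormedAddCommGroup E] [NormedSpace ℂ E] [NormedAddCommGroup X]

noncomputable def laurentSubst (m : ℕ) (p : ℂ × E × X) : ℂ × E × X :=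
  (p.1, (p.1 ^ m)⁻¹ • p.2.1, p.2.2)

theorem sphere_prod_ball_subset_laurentSubst_preimage {Ω : Set (ℂ × E × X)} {δ : ℝ} (m : ℕ)
    (hδ : 0 < δ) (hΩ : closedBall 0 δ ⊆ Ω) :
    sphere 0 |δ| ×ˢ (ball (0 : E) (δ ^ (m + 1)) ×ˢ ball (0 : X) δ) ⊆
      {p | p.1 ≠ 0 ∧ laurentSubst m p ∈ Ω} := by
  rintro ⟨z, t, x⟩ ⟨hz, ht, hx⟩
  rw [abs_of_pos hδ, mem_sphere_zero_iff_norm] at hz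
  rw [mem_ball_zero_iff] at ht hx
  have hzt : ‖(z ^ m)⁻¹ • t‖ ≤ δ := by
    rw [norm_smul, norm_inv, norm_pow, hz, inv_mul_le_iff₀ (by positivity), ← pow_succ]
    exact ht.le
  refine ⟨norm_pos_iff.1 (hz ▸ hδ), hΩ ?_⟩
  rw [mem_closedBall_zero_iff, norm_prod_le_iff, norm_prod_le_iff]
  exact ⟨hz.le, hzt, hx.le⟩

theorem ContDiffOn.comp_laurentSubst_mul_inv [NormedSpace ℝ X] {P : ℂ × E × X → ℂ}
    {Ω : Set (ℂ × E × X)} {n : ℕ∞} (m : ℕ) (hP : ContDiffOn ℝ n P Ω) :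
    ContDiffOn ℝ n (fun p => P (laurentSubst m p) * p.1⁻¹)
      {p | p.1 ≠ 0 ∧ laurentSubst m p ∈ Ω} := by
  have hsubst : ContDiffOn ℝ n (laurentSubst m) {p : ℂ × E × X | p.1 ≠ 0} :=
    contDiffOn_fst.prodMk <|
      (((contDiff_fst.pow m).contDiffOn.inv fun p hp => pow_ne_zero m hp).smul
        (contDiff_fst.comp contDiff_snd).contDiffOn).prodMk
        (contDiff_snd.comp contDiff_snd).contDiffOn
  exact (hP.comp (hsubst.mono fun p hp => hp.1) fun p hp => hp.2).mul
    (contDiffOn_fst.inv fun p hp => hp.1)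

end LaurentSubstitution

theorem laurent_constant_coefficient_smooth_general {n h m : ℕ} (τ : ℕ∞)
    (Ω : Set (ℂ × (Fin n → ℂ) × (Fin h → ℝ))) (hΩ : IsOpen Ω)
    (hΩ0 : (0 : ℂ × (Fin n → ℂ) × (Fin h → ℝ)) ∈ Ω)
    (P : ℂ × (Fin n → ℂ) × (Fin h → ℝ) → ℂ)
    (hPsmooth : ContDiffOn ℝ τ P Ω)
    (hPhol : ∀ x : Fin h → ℝ,
      DifferentiableOn ℂ (fun v : ℂ × (Fin n → ℂ) => P (v.1, v.2, x))
        {v : ℂ × (Fin n → ℂ) | (v.1, v.2, x) ∈ Ω}) :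
    ∃ r > (0 : ℝ), ∃ ε > (0 : ℝ), ∃ X ∈ 𝓝 (0 : Fin h → ℝ),
      ContDiffOn ℝ τ
        (fun q : (Fin n → ℂ) × (Fin h → ℝ) =>
          (2 * (Real.pi : ℂ) * Complex.I)⁻¹ •
            ∮ z in C(0, r), P (z, (z ^ m)⁻¹ • q.1, q.2) * z⁻¹)
        (ball (0 : Fin n → ℂ) ε ×ˢ X) ∧
      ∀ x ∈ X, DifferentiableOn ℂ
        (fun t : Fin n → ℂ =>
          (2 * (Real.pi : ℂ) * Complex.I)⁻¹ •
            ∮ z in C(0, r), P (z, (z ^ m)⁻¹ • t, x) * z⁻¹)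
        (ball (0 : Fin n → ℂ) ε) := by
  obtain ⟨δ, hδ, hδΩ⟩ := nhds_basis_closedBall.mem_iff.1 (hΩ.mem_nhds hΩ0)
  have hsub := sphere_prod_ball_subset_laurentSubst_preimage (E := Fin n → ℂ) m hδ hδΩ
  have hg := hPsmooth.comp_laurentSubst_mul_inv m
  refine ⟨δ, hδ, δ ^ (m + 1), by positivity, ball 0 δ, ball_mem_nhds 0 hδ, ?_, fun x hx => ?_⟩
  · exact (contDiffOn_circleIntegral_of_contDiffOn_prod 0 δ (isOpen_ball.prod isOpen_ball) hg
      hsub).const_smul _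
  have hslice : ∀ z ∈ sphere (0 : ℂ) |δ|, DifferentiableOn ℂ
      (fun t : Fin n → ℂ => P (z, (z ^ m)⁻¹ • t, x) * z⁻¹) (ball 0 (δ ^ (m + 1))) :=
    fun z hz => ((hPhol x).comp (g := fun v : ℂ × (Fin n → ℂ) => P (v.1, v.2, x))
      (f := fun t => (z, (z ^ m)⁻¹ • t)) (by fun_prop) fun t ht =>
        (hsub (show (z, t, x) ∈ _ from ⟨hz, ht, hx⟩)).2).mul_const z⁻¹
  exact (differentiableOn_circleIntegral_of_continuousOn_prod 0 δ
    (g := fun p : ℂ × (Fin n → ℂ) => P (laurentSubst m (p.1, p.2, x)) * p.1⁻¹)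
    (V := (fun p : ℂ × (Fin n → ℂ) => (p.1, p.2, x)) ⁻¹' {p | p.1 ≠ 0 ∧ laurentSubst m p ∈ Ω})
    isOpen_ball
    (hg.continuousOn.comp (by fun_prop) fun p hp => hp)
    (fun p hp => hsub ⟨hp.1, hp.2, hx⟩) hslice).fun_const_smul _

/-- Lemma 4.3 of Kim–Zaitsev (resolution of singularities with smooth parameters): if
`P(λ, t̃; x)` is `C^τ` near `0`, holomorphic in `(λ, t̃)` for each fixed `x`, then the
constant Laurent coefficient
`c₀(t; x) = (2πi)⁻¹ ∮_{|λ|=r} P(λ, t/λ^m; x) λ⁻¹ dλ`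
of `λ ↦ P(λ, t/λ^m; x)` is of class `C^τ` jointly in `(t, x)` and holomorphic in `t` for
each fixed `x`, for `t` and `x` in suitable neighborhoods of `0`. -/
theorem laurent_constant_coefficient_smooth {n h m : ℕ} (τ : ℕ∞) (hm : 1 ≤ m)
    (Ω : Set (ℂ × (Fin n → ℂ) × (Fin h → ℝ))) (hΩ : IsOpen Ω)
    (hΩ0 : (0 : ℂ × (Fin n → ℂ) × (Fin h → ℝ)) ∈ Ω)
    (P : ℂ × (Fin n → ℂ) × (Fin h → ℝ) → ℂ)
    (hPsmooth : ContDiffOn ℝ τ P Ω)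
    (hPhol : ∀ x : Fin h → ℝ,
      DifferentiableOn ℂ (fun v : ℂ × (Fin n → ℂ) => P (v.1, v.2, x))
        {v : ℂ × (Fin n → ℂ) | (v.1, v.2, x) ∈ Ω}) :
    ∃ r > (0 : ℝ), ∃ ε > (0 : ℝ), ∃ X ∈ 𝓝 (0 : Fin h → ℝ),
      ContDiffOn ℝ τ
        (fun q : (Fin n → ℂ) × (Fin h → ℝ) =>
          (2 * (Real.pi : ℂ) * Complex.I)⁻¹ •
            ∮ z in C(0, r), P (z, (z ^ m)⁻¹ • q.1, q.2) * z⁻¹)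
        (ball (0 : Fin n → ℂ) ε ×ˢ X) ∧
      ∀ x ∈ X, DifferentiableOn ℂ
        (fun t : Fin n → ℂ =>
          (2 * (Real.pi : ℂ) * Complex.I)⁻¹ •
            ∮ z in C(0, r), P (z, (z ^ m)⁻¹ • t, x) * z⁻¹)
        (ball (0 : Fin n → ℂ) ε) :=
  laurent_constant_coefficient_smooth_general τ Ω hΩ hΩ0 P hPsmooth hPhol
end

section
/- Let h ≥ 0 and g ≥ 1 be integers. Let R(λ, t̃) be a holomorphic function on a neighborhood of 0 in ℂ × ℂ^n satisfying R(λ, t̃) = o(|(λ, t̃)|^h) as (λ, t̃) → 0, and let δ(λ) be a holomorphic function on a neighborhood of 0 in ℂ with vanishing order exactly g at λ = 0, i.e. δ(λ) = λ^g u(λ) with u holomorphic and u(0) ≠ 0. Then there exist r > 0 and ε > 0 such that the function c₀(t) := (2πi)^{-1} ∮_{|λ|=r} R(λ, t/δ(λ)) λ^{-1} dλ is well defined and holomorphic for |t| < ε, and c₀(t) = o(|t|^{h/(g+1)}) as t → 0. -/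
/-!
Deform the circle `|λ| = r` to the circle `|λ| = s` with `s ^ (g + 1) = |t|`. There
`|δ(λ)| ≥ c s ^ g`, so `t / δ(λ)` and hence `(λ, t / δ(λ))` have size `O(s)`, and
`R = o(|·| ^ h)` bounds `c₀(t)` by `o(s ^ h) = o(|t| ^ (h / (g + 1)))`. Holomorphy in `t`
comes from differentiating under the integral sign, the `t`-derivative of the integrand being
controlled by the Cauchy estimate.
-/

open Topology Metric Asymptotics MeasureTheory Set Complex Filter Real

theorem norm_fderiv_le_of_forall_norm_le {E F : Type*} [NormedAddCommGroup E] [NormedSpace ℂ E]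
    [NormedAddCommGroup F] [NormedSpace ℂ F] {f : E → F} {x : E} {d M : ℝ} (hd : 0 < d)
    (hf : DifferentiableOn ℂ f (ball x d)) (hM : ∀ y ∈ ball x d, ‖f y‖ ≤ M) :
    ‖fderiv ℂ f x‖ ≤ 2 * M / d := by
  refine Complex.norm_fderiv_le_div_of_mapsTo_ball hf (fun y hy => ?_) hd
  rw [mem_closedBall_iff_norm]
  linarith [norm_sub_le (f y) (f x), hM y hy, hM x (mem_ball_self hd)]

theorem continuous_deriv_circleMap (c : ℂ) (r : ℝ) : Continuous (deriv (circleMap c r)) := by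
  rw [funext (deriv_circleMap c r)]
  fun_prop

theorem measurable_fderiv_comp_prodMk_left {E : Type*} [NormedAddCommGroup E] [NormedSpace ℂ E]
    [FiniteDimensional ℂ E] {f : E × ℂ → ℂ} {x : E} {γ : ℝ → ℂ} (hγ : Continuous γ)
    (hf : ∀ θ, DifferentiableAt ℂ f (x, γ θ)) :
    Measurable fun θ => fderiv ℂ (fun y => f (y, γ θ)) x := by
  borelize E
  have hchain : ∀ θ, fderiv ℂ (fun y => f (y, γ θ)) x =
      (fderiv ℂ f (x, γ θ)).comp (ContinuousLinearMap.inl ℂ E ℂ) := fun θ =>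
    ((hf θ).hasFDerivAt.comp x ((hasFDerivAt_id x).prodMk (hasFDerivAt_const _ x))).fderiv
  simp_rw [hchain]
  exact (continuous_id.clm_comp continuous_const).measurable.comp
    ((measurable_fderiv ℂ f).comp (by fun_prop : Continuous fun θ => (x, γ θ)).measurable)

theorem exists_forall_norm_fderiv_comp_prodMk_le {E F : Type*} [NormedAddCommGroup E]
    [NormedSpace ℂ E] [ProperSpace E] [NormedAddCommGroup F] [NormedSpace ℂ F] {f : E × F → ℂ}
    {V : Set (E × F)} {K : Set F} {x₀ : E} {d : ℝ} (hV : IsOpen V) (hf : DifferentiableOn ℂ f V)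
    (hK : IsCompact K) (hd : 0 < d) (hKV : closedBall x₀ d ×ˢ K ⊆ V) :
    ∃ M, ∀ x ∈ ball x₀ (d / 2), ∀ z ∈ K, ‖fderiv ℂ (fun y => f (y, z)) x‖ ≤ M := by
  obtain ⟨M, hM⟩ := ((isCompact_closedBall x₀ d).prod hK).exists_bound_of_continuousOn
    (hf.continuousOn.mono hKV)
  have hball : ∀ x ∈ ball x₀ (d / 2), ball x (d / 2) ⊆ closedBall x₀ d := fun x hx y hy => by
    rw [mem_ball] at hx hy
    rw [mem_closedBall]
    linarith [dist_triangle y x x₀]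
  refine ⟨2 * M / (d / 2), fun x hx z hz => norm_fderiv_le_of_forall_norm_le (half_pos hd)
    (fun y hy => ?_) (fun y hy => hM _ ⟨hball x hx hy, hz⟩)⟩
  exact ((hf.differentiableAt (hV.mem_nhds (hKV ⟨hball x hx hy, hz⟩))).comp y
    (by fun_prop)).differentiableWithinAt

theorem differentiableOn_circleIntegral_of_differentiableOn_prod {E : Type*}
    [NormedAddCommGroup E] [NormedSpace ℂ E] [FiniteDimensional ℂ E]
    {f : E × ℂ → ℂ} {V : Set (E × ℂ)} {U : Set E} {c : ℂ} {r : ℝ} (hr : 0 ≤ r)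
    (hV : IsOpen V) (hf : DifferentiableOn ℂ f V) (hU : IsOpen U) (hUV : U ×ˢ sphere c r ⊆ V) :
    DifferentiableOn ℂ (fun x => ∮ z in C(c, r), f (x, z)) U := by
  intro x₀ hx₀
  obtain ⟨d, hd, hdU⟩ := Metric.isOpen_iff.mp hU x₀ hx₀
  have hKV : closedBall x₀ (d / 2) ×ˢ sphere c r ⊆ V :=
    (prod_mono ((closedBall_subset_ball (half_lt_self hd)).trans hdU) subset_rfl).trans hUV
  obtain ⟨M, hM⟩ := exists_forall_norm_fderiv_comp_prodMk_le hV hf (isCompact_sphere c r)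
    (half_pos hd) hKV
  set γ := circleMap c r
  have hγ : ∀ θ, γ θ ∈ sphere c r := circleMap_mem_sphere c hr
  have hfγ : ∀ x ∈ closedBall x₀ (d / 2), ∀ θ, DifferentiableAt ℂ f (x, γ θ) :=
    fun x hx θ => hf.differentiableAt (hV.mem_nhds (hKV ⟨hx, hγ θ⟩))
  have hfγ_cont : ∀ x ∈ closedBall x₀ (d / 2), Continuous fun θ => deriv γ θ • f (x, γ θ) :=
    fun x hx => (continuous_deriv_circleMap c r).smul
      (continuous_iff_continuousAt.2 fun θ => ContinuousAt.comp (g := f) (hfγ x hx θ).continuousAt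
        (continuousAt_const.prodMk (continuous_circleMap c r).continuousAt))
  have hx₀ : x₀ ∈ closedBall x₀ (d / 2) := mem_closedBall_self (by positivity)
  refine DifferentiableAt.differentiableWithinAt <| HasFDerivAt.differentiableAt <|
    intervalIntegral.hasFDerivAt_integral_of_dominated_of_fderiv_le
    (F := fun x θ => deriv γ θ • f (x, γ θ))
    (F' := fun x θ => deriv γ θ • fderiv ℂ (fun y => f (y, γ θ)) x) (μ := volume)
    (a := 0) (b := 2 * π) (bound := fun _ => |r| * M)
    (ball_mem_nhds x₀ (by positivity : 0 < d / 2 / 2))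
    (eventually_of_mem (closedBall_mem_nhds x₀ (by positivity))
      fun x hx => (hfγ_cont x hx).aestronglyMeasurable)
    ((hfγ_cont x₀ hx₀).intervalIntegrable _ _)
    ((continuous_deriv_circleMap c r).aestronglyMeasurable.smul
      (measurable_fderiv_comp_prodMk_left (continuous_circleMap c r)
        (hfγ x₀ hx₀)).aestronglyMeasurable)
    (Eventually.of_forall fun θ _ x hx => ?_) intervalIntegrable_const
    (Eventually.of_forall fun θ _ x hx => ?_)
  · rw [norm_smul, deriv_circleMap]
    simp only [norm_mul, norm_circleMap_zero, norm_I, mul_one]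
    gcongr
    exact hM x hx _ (hγ θ)
  · have hx' : x ∈ closedBall x₀ (d / 2) :=
      ball_subset_closedBall (ball_subset_ball (half_le_self (half_pos hd).le) hx)
    exact (((hfγ x hx' θ).comp x (by fun_prop)).hasFDerivAt).const_smul (deriv γ θ)

theorem norm_two_pi_I_inv_smul_circleIntegral_le_of_differentiableAt_annulus
    {E : Type*} [NormedAddCommGroup E] [NormedSpace ℂ E] [CompleteSpace E]
    {f : ℂ → E} {s r B : ℝ} (hs : 0 < s) (hsr : s ≤ r)
    (hf : ∀ z : ℂ, s ≤ ‖z‖ → ‖z‖ ≤ r → DifferentiableAt ℂ f z)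
    (hB : ∀ z ∈ sphere (0 : ℂ) s, ‖f z‖ ≤ B) :
    ‖(2 * π * I : ℂ)⁻¹ • ∮ z in C(0, r), f z‖ ≤ s * B := by
  have hann : ∀ z ∈ closedBall (0 : ℂ) r \ ball 0 s, DifferentiableAt ℂ f z := fun z ⟨hzr, hzs⟩ =>
    hf z (by simpa using hzs) (by simpa using hzr)
  rw [circleIntegral_eq_of_differentiable_on_annulus_off_countable hs hsr countable_empty
    (fun z hz => (hann z hz).continuousAt.continuousWithinAt)
    (fun z hz =>
      hann z ⟨ball_subset_closedBall hz.1.1, fun h => hz.1.2 (ball_subset_closedBall h)⟩)]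
  exact circleIntegral.norm_two_pi_i_inv_smul_integral_le_of_norm_le_const hs.le hB

theorem norm_inv_smul_le_div {E : Type*} [NormedAddCommGroup E] [NormedSpace ℂ E]
    {a : ℂ} {b : ℝ} (hb : 0 < b) (hab : b ≤ ‖a‖) (t : E) : ‖a⁻¹ • t‖ ≤ ‖t‖ / b := by
  rw [norm_smul, norm_inv, inv_mul_eq_div]
  gcongr

theorem exists_differentiableOn_ball_and_mul_norm_pow_le_norm {δ u : ℂ → ℂ} {g : ℕ}
    (hδ : ∀ᶠ z in 𝓝 0, δ z = z ^ g * u z) (hu : ∀ᶠ z in 𝓝 0, DifferentiableAt ℂ u z)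
    (hu0 : u 0 ≠ 0) :
    ∃ c > 0, ∃ r > 0,
      DifferentiableOn ℂ δ (ball 0 r) ∧ ∀ z ∈ ball (0 : ℂ) r, c * ‖z‖ ^ g ≤ ‖δ z‖ := by
  have hlow : ∀ᶠ z in 𝓝 0, ‖u 0‖ / 2 < ‖u z‖ :=
    hu.self_of_nhds.continuousAt.norm.eventually (lt_mem_nhds (half_lt_self (norm_pos_iff.2 hu0)))
  have hδdiff : ∀ᶠ z in 𝓝 0, DifferentiableAt ℂ δ z := by
    filter_upwards [hδ.eventually_nhds, hu.eventually_nhds] with z hδz huz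
    exact ((differentiableAt_pow g).mul huz.self_of_nhds).congr_of_eventuallyEq hδz
  obtain ⟨r, hr, hball⟩ := Metric.eventually_nhds_iff_ball.1 (hδdiff.and (hδ.and hlow))
  refine ⟨‖u 0‖ / 2, by positivity, r, hr, fun z hz => (hball z hz).1.differentiableWithinAt,
    fun z hz => ?_⟩
  obtain ⟨-, hδz, hluz⟩ := hball z hz
  rw [hδz, norm_mul, norm_pow, mul_comm]
  gcongr

theorem apply_zero_eq_zero_of_isLittleO_norm_pow {E F : Type*} [NormedAddCommGroup E]
    [NormedAddCommGroup F] {f : E → F} {h : ℕ} (hf : f =o[𝓝 0] fun v => ‖v‖ ^ h) : f 0 = 0 :=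
  eq_of_tendsto_nhds <| isLittleO_one_iff ℝ |>.1 <|
    hf.trans_isBigO (((continuous_norm.pow h).tendsto 0).isBigO_one ℝ)

variable {E : Type*} [NormedAddCommGroup E]

/-- When `c * ‖λ‖ ^ g ≤ ‖δ λ‖` for `‖λ‖ < r ≤ ρ`, every pair `(t, λ)` in this set has
`(λ, t / δ λ)` in the ball of radius `ρ`. -/
def substDomain (g : ℕ) (c ρ r : ℝ) : Set (E × ℂ) :=
  {p | 0 < ‖p.2‖ ∧ ‖p.2‖ < r ∧ ‖p.1‖ < c * ρ * ‖p.2‖ ^ g}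

theorem isOpen_substDomain (g : ℕ) (c ρ r : ℝ) : IsOpen (substDomain (E := E) g c ρ r) := by
  simp only [substDomain, ofPred_and]
  exact (isOpen_lt continuous_const (by fun_prop)).inter
    ((isOpen_lt (by fun_prop) continuous_const).inter (isOpen_lt (by fun_prop) (by fun_prop)))

variable [NormedSpace ℂ E]

noncomputable def laurentConstCoeff (R : ℂ × E → ℂ) (δ : ℂ → ℂ) (r : ℝ) (t : E) : ℂ :=
  (2 * π * I : ℂ)⁻¹ • ∮ z in C(0, r), R (z, (δ z)⁻¹ • t) * z⁻¹

section Substitution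

variable {R : ℂ × E → ℂ} {δ : ℂ → ℂ} {g : ℕ} {c ρ r₁ r : ℝ}

theorem mem_ball_of_mem_substDomain (hc : 0 < c)
    (hδ : ∀ z ∈ ball (0 : ℂ) r₁, c * ‖z‖ ^ g ≤ ‖δ z‖) (hr₁ : r ≤ r₁) (hrρ : r ≤ ρ)
    {p : E × ℂ} (hp : p ∈ substDomain g c ρ r) :
    (p.2, (δ p.2)⁻¹ • p.1) ∈ ball (0 : ℂ × E) ρ := by
  obtain ⟨hz0, hzr, ht⟩ := hp
  have hcz : 0 < c * ‖p.2‖ ^ g := by positivity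
  rw [mem_ball_zero_iff, Prod.norm_def, max_lt_iff]
  refine ⟨hzr.trans_le hrρ, (norm_inv_smul_le_div hcz (hδ _ ?_) _).trans_lt ?_⟩
  · exact mem_ball_zero_iff.2 (hzr.trans_le hr₁)
  · rw [div_lt_iff₀ hcz]
    linarith

theorem differentiableOn_substDomain (hc : 0 < c) (hR : DifferentiableOn ℂ R (ball 0 ρ))
    (hδd : DifferentiableOn ℂ δ (ball 0 r₁)) (hδ : ∀ z ∈ ball (0 : ℂ) r₁, c * ‖z‖ ^ g ≤ ‖δ z‖)
    (hr₁ : r ≤ r₁) (hrρ : r ≤ ρ) :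
    DifferentiableOn ℂ (fun p : E × ℂ => R (p.2, (δ p.2)⁻¹ • p.1) * p.2⁻¹)
      (substDomain g c ρ r) := by
  intro p hp
  have hz : p.2 ∈ ball (0 : ℂ) r₁ := mem_ball_zero_iff.2 (hp.2.1.trans_le hr₁)
  have hz0 : p.2 ≠ 0 := norm_pos_iff.1 hp.1
  have hδ0 : δ p.2 ≠ 0 := norm_pos_iff.1 ((by positivity : 0 < c * ‖p.2‖ ^ g).trans_le (hδ _ hz))
  have hδp : DifferentiableAt ℂ (fun p : E × ℂ => δ p.2) p :=
    (hδd.differentiableAt (isOpen_ball.mem_nhds hz)).comp p differentiableAt_snd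
  have hRp : DifferentiableAt ℂ R (p.2, (δ p.2)⁻¹ • p.1) :=
    hR.differentiableAt (isOpen_ball.mem_nhds (mem_ball_of_mem_substDomain hc hδ hr₁ hrρ hp))
  refine DifferentiableAt.differentiableWithinAt ?_
  exact (hRp.comp p (differentiableAt_snd.prodMk ((hδp.inv hδ0).smul differentiableAt_fst))).mul
    (differentiableAt_snd.inv hz0)

theorem differentiableOn_laurentConstCoeff [FiniteDimensional ℂ E] (hc : 0 < c)
    (hR : DifferentiableOn ℂ R (ball 0 ρ)) (hδd : DifferentiableOn ℂ δ (ball 0 r₁))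
    (hδ : ∀ z ∈ ball (0 : ℂ) r₁, c * ‖z‖ ^ g ≤ ‖δ z‖) (hr : 0 < r) (hr₁ : r < r₁) (hrρ : r < ρ) :
    DifferentiableOn ℂ (laurentConstCoeff R δ r) (ball 0 (c * ρ * r ^ g)) := by
  have hsub : ball (0 : E) (c * ρ * r ^ g) ×ˢ sphere 0 r ⊆ substDomain g c ρ (min r₁ ρ) := by
    rintro ⟨t, z⟩ ⟨ht, hz⟩
    rw [mem_ball_zero_iff] at ht
    rw [mem_sphere_zero_iff_norm] at hz
    exact ⟨hz ▸ hr, hz ▸ lt_min hr₁ hrρ, hz ▸ ht⟩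
  exact (differentiableOn_circleIntegral_of_differentiableOn_prod hr.le (isOpen_substDomain _ _ _ _)
    (differentiableOn_substDomain hc hR hδd hδ (min_le_left _ _) (min_le_right _ _)) isOpen_ball
    hsub).const_smul ((2 * π * I : ℂ)⁻¹)

theorem norm_laurentConstCoeff_le (hc : 0 < c) (hR : DifferentiableOn ℂ R (ball 0 ρ))
    (hδd : DifferentiableOn ℂ δ (ball 0 r₁)) (hδ : ∀ z ∈ ball (0 : ℂ) r₁, c * ‖z‖ ^ g ≤ ‖δ z‖)
    (hr₁ : r < r₁) (hrρ : r < ρ) {s B : ℝ} (hs : 0 < s) (hsr : s ≤ r) {t : E}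
    (ht : ‖t‖ < c * ρ * s ^ g) (hB : ∀ z ∈ sphere (0 : ℂ) s, ‖R (z, (δ z)⁻¹ • t)‖ ≤ B) :
    ‖laurentConstCoeff R δ r t‖ ≤ B := by
  have hρ : 0 < ρ := hs.trans_le (hsr.trans hrρ.le)
  have hdiff := differentiableOn_substDomain hc hR hδd hδ (min_le_left r₁ ρ) (min_le_right r₁ ρ)
  have hann : ∀ z : ℂ, s ≤ ‖z‖ → ‖z‖ ≤ r →
      DifferentiableAt ℂ (fun z => R (z, (δ z)⁻¹ • t) * z⁻¹) z := by
    intro z hsz hzr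
    have hmem : (t, z) ∈ substDomain g c ρ (min r₁ ρ) :=
      ⟨hs.trans_le hsz, hzr.trans_lt (lt_min hr₁ hrρ), ht.trans_le (by gcongr)⟩
    exact (hdiff.differentiableAt ((isOpen_substDomain _ _ _ _).mem_nhds hmem)).comp z
      (differentiableAt_const t |>.prodMk differentiableAt_id)
  have hsphere : ∀ z ∈ sphere (0 : ℂ) s, ‖R (z, (δ z)⁻¹ • t) * z⁻¹‖ ≤ B / s := by
    intro z hz
    rw [mem_sphere_zero_iff_norm] at hz
    rw [norm_mul, norm_inv, hz, ← div_eq_mul_inv]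
    gcongr
    exact hB z (mem_sphere_zero_iff_norm.2 hz)
  calc ‖laurentConstCoeff R δ r t‖ ≤ s * (B / s) :=
        norm_two_pi_I_inv_smul_circleIntegral_le_of_differentiableAt_annulus hs hsr hann hsphere
    _ = B := mul_div_cancel₀ B hs.ne'

theorem laurentConstCoeff_zero (hR : DifferentiableOn ℂ R (ball 0 ρ)) (hR0 : R 0 = 0)
    (hr : 0 < r) (hrρ : r < ρ) : laurentConstCoeff R δ r 0 = 0 := by
  have hclosed : DifferentiableOn ℂ (fun z : ℂ => R (z, 0)) (closedBall 0 r) := by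
    refine hR.comp (differentiableOn_id.prodMk (differentiableOn_const 0)) fun z hz => ?_
    rw [mem_closedBall_zero_iff] at hz
    simpa [Prod.norm_def] using hz.trans_lt hrρ
  have hcauchy := hclosed.circleIntegral_sub_inv_smul (mem_ball_self hr)
  simp only [sub_zero, smul_eq_mul] at hcauchy
  simp only [laurentConstCoeff, smul_zero, mul_comm _ (_ : ℂ)⁻¹, hcauchy]
  rw [show R (0, 0) = 0 from hR0, mul_zero, smul_zero]

theorem norm_prod_inv_smul_le (hc : 0 < c) {s : ℝ} (hs : 0 < s) {z : ℂ} (hz : ‖z‖ = s) {t : E}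
    (ht : s ^ (g + 1) = ‖t‖) (hδz : c * s ^ g ≤ ‖δ z‖) :
    ‖(z, (δ z)⁻¹ • t)‖ ≤ max 1 c⁻¹ * s := by
  rw [Prod.norm_def, hz]
  refine max_le (le_mul_of_one_le_left hs.le (le_max_left _ _)) ?_
  calc ‖(δ z)⁻¹ • t‖ ≤ ‖t‖ / (c * s ^ g) := norm_inv_smul_le_div (by positivity) hδz t
    _ = c⁻¹ * s := by rw [← ht, pow_succ]; field_simp
    _ ≤ max 1 c⁻¹ * s := by gcongr; exact le_max_right _ _

theorem isLittleO_laurentConstCoeff {h : ℕ} (hc : 0 < c) (hR : DifferentiableOn ℂ R (ball 0 ρ))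
    (hRo : R =o[𝓝 0] fun v => ‖v‖ ^ h) (hδd : DifferentiableOn ℂ δ (ball 0 r₁))
    (hδ : ∀ z ∈ ball (0 : ℂ) r₁, c * ‖z‖ ^ g ≤ ‖δ z‖) (hr : 0 < r) (hr₁ : r < r₁) (hrρ : r < ρ) :
    laurentConstCoeff R δ r =o[𝓝 0] fun t : E => ‖t‖ ^ ((h : ℝ) / ((g : ℝ) + 1)) := by
  set K : ℝ := max 1 c⁻¹
  have hK : 0 < K := zero_lt_one.trans_le (le_max_left _ _)
  have hρ : 0 < ρ := hr.trans hrρ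
  have hroot : Tendsto (fun t : E => ‖t‖ ^ ((g : ℝ) + 1)⁻¹) (𝓝 0) (𝓝 0) := by
    simpa [Real.zero_rpow (by positivity : ((g : ℝ) + 1)⁻¹ ≠ 0)] using
      (continuous_norm.tendsto (0 : E)).rpow_const (p := ((g : ℝ) + 1)⁻¹) (Or.inr (by positivity))
  rw [isLittleO_iff]
  intro C hC
  obtain ⟨η, hη, hRη⟩ := Metric.eventually_nhds_iff_ball.1 (hRo.def (div_pos hC (pow_pos hK h)))
  filter_upwards [hroot.eventually
    (gt_mem_nhds (lt_min (lt_min hr (mul_pos hc hρ)) (div_pos hη hK)))] with t hst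
  obtain ⟨⟨hsr, hscρ⟩, hsη⟩ : (_ < r ∧ _ < c * ρ) ∧ _ < η / K := by
    simpa only [lt_min_iff] using hst
  rcases eq_or_ne t 0 with rfl | ht0
  · rw [laurentConstCoeff_zero hR (apply_zero_eq_zero_of_isLittleO_norm_pow hRo) hr hrρ, norm_zero]
    positivity
  set s := ‖t‖ ^ ((g : ℝ) + 1)⁻¹
  have hs : 0 < s := Real.rpow_pos_of_pos (norm_pos_iff.2 ht0) _
  have hst : s ^ (g + 1) = ‖t‖ := by
    simpa using Real.rpow_inv_natCast_pow (norm_nonneg t) (Nat.succ_ne_zero g)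
  have hsh : s ^ h = ‖t‖ ^ ((h : ℝ) / ((g : ℝ) + 1)) := by
    rw [← Real.rpow_mul_natCast (norm_nonneg t), inv_mul_eq_div]
  refine (norm_laurentConstCoeff_le hc hR hδd hδ hr₁ hrρ hs hsr.le (B := C * s ^ h) ?_ ?_).trans_eq
    ?_
  · rw [← hst, pow_succ, mul_comm (c * ρ)]
    exact mul_lt_mul_of_pos_left hscρ (pow_pos hs g)
  · intro z hz
    rw [mem_sphere_zero_iff_norm] at hz
    have hzδ : c * s ^ g ≤ ‖δ z‖ := hz ▸ hδ z (mem_ball_zero_iff.2 (hz ▸ hsr.trans hr₁))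
    have hv := norm_prod_inv_smul_le hc hs hz hst hzδ
    have hKs : K * s < η := by rwa [lt_div_iff₀' hK] at hsη
    calc ‖R (z, (δ z)⁻¹ • t)‖ ≤ C / K ^ h * ‖(z, (δ z)⁻¹ • t)‖ ^ h := by
          simpa only [norm_pow, norm_norm] using hRη _ (mem_ball_zero_iff.2 (hv.trans_lt hKs))
      _ ≤ C / K ^ h * (K * s) ^ h := by gcongr
      _ = C * s ^ h := by rw [mul_pow]; field_simp
  · rw [hsh, Real.norm_of_nonneg (by positivity)]

end Substitution

theorem laurent_constant_coefficient_littleO_general {n h g : ℕ}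
    (Ω : Set (ℂ × (Fin n → ℂ))) (hΩ : IsOpen Ω) (hΩ0 : (0 : ℂ × (Fin n → ℂ)) ∈ Ω)
    (R : ℂ × (Fin n → ℂ) → ℂ) (hRhol : DifferentiableOn ℂ R Ω)
    (hRo : R =o[𝓝 0] fun v : ℂ × (Fin n → ℂ) => ‖v‖ ^ h)
    (D : Set ℂ) (hD : IsOpen D) (hD0 : (0 : ℂ) ∈ D)
    (δ u : ℂ → ℂ) (hu : DifferentiableOn ℂ u D) (hu0 : u 0 ≠ 0)
    (hδ : ∀ z ∈ D, δ z = z ^ g * u z) :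
    ∃ r > (0 : ℝ), ∃ ε > (0 : ℝ),
      DifferentiableOn ℂ
        (fun t : Fin n → ℂ =>
          (2 * (Real.pi : ℂ) * Complex.I)⁻¹ •
            ∮ z in C(0, r), R (z, (δ z)⁻¹ • t) * z⁻¹)
        (ball (0 : Fin n → ℂ) ε) ∧
      (fun t : Fin n → ℂ =>
          (2 * (Real.pi : ℂ) * Complex.I)⁻¹ •
            ∮ z in C(0, r), R (z, (δ z)⁻¹ • t) * z⁻¹)
        =o[𝓝 0] fun t : Fin n → ℂ => ‖t‖ ^ ((h : ℝ) / ((g : ℝ) + 1)) := by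
  obtain ⟨ρ, hρ, hΩρ⟩ := Metric.isOpen_iff.mp hΩ 0 hΩ0
  have hR := hRhol.mono hΩρ
  obtain ⟨c, hc, r₁, hr₁pos, hδd, hδlow⟩ := exists_differentiableOn_ball_and_mul_norm_pow_le_norm
    (eventually_of_mem (hD.mem_nhds hD0) hδ)
    (eventually_of_mem (hD.mem_nhds hD0) fun z hz => hu.differentiableAt (hD.mem_nhds hz)) hu0
  set r := min r₁ ρ / 2
  have hr : 0 < r := by positivity
  have hr₁ : r < r₁ := (half_lt_self (lt_min hr₁pos hρ)).trans_le (min_le_left _ _)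
  have hrρ : r < ρ := (half_lt_self (lt_min hr₁pos hρ)).trans_le (min_le_right _ _)
  exact ⟨r, hr, c * ρ * r ^ g, by positivity,
    differentiableOn_laurentConstCoeff hc hR hδd hδlow hr hr₁ hrρ,
    isLittleO_laurentConstCoeff hc hR hRo hδd hδlow hr hr₁ hrρ⟩

/-- Lemma 4.4 of Kim–Zaitsev: if `R(λ, t̃)` is holomorphic near `0` with
`R(λ, t̃) = o(|(λ, t̃)|^h)` and `δ(λ) = λ^g u(λ)` with `u` holomorphic, `u(0) ≠ 0`, then
the constant Laurent coefficient
`c₀(t) = (2πi)⁻¹ ∮_{|λ|=r} R(λ, t/δ(λ)) λ⁻¹ dλ`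
of `λ ↦ R(λ, t/δ(λ))` is holomorphic near `0` and satisfies
`c₀(t) = o(|t|^{h/(g+1)})` as `t → 0`. -/
theorem laurent_constant_coefficient_littleO {n h g : ℕ} (hg : 1 ≤ g)
    (Ω : Set (ℂ × (Fin n → ℂ))) (hΩ : IsOpen Ω) (hΩ0 : (0 : ℂ × (Fin n → ℂ)) ∈ Ω)
    (R : ℂ × (Fin n → ℂ) → ℂ) (hRhol : DifferentiableOn ℂ R Ω)
    (hRo : R =o[𝓝 0] fun v : ℂ × (Fin n → ℂ) => ‖v‖ ^ h)
    (D : Set ℂ) (hD : IsOpen D) (hD0 : (0 : ℂ) ∈ D)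
    (δ u : ℂ → ℂ) (hu : DifferentiableOn ℂ u D) (hu0 : u 0 ≠ 0)
    (hδ : ∀ z ∈ D, δ z = z ^ g * u z) :
    ∃ r > (0 : ℝ), ∃ ε > (0 : ℝ),
      DifferentiableOn ℂ
        (fun t : Fin n → ℂ =>
          (2 * (Real.pi : ℂ) * Complex.I)⁻¹ •
            ∮ z in C(0, r), R (z, (δ z)⁻¹ • t) * z⁻¹)
        (ball (0 : Fin n → ℂ) ε) ∧
      (fun t : Fin n → ℂ =>
          (2 * (Real.pi : ℂ) * Complex.I)⁻¹ •
            ∮ z in C(0, r), R (z, (δ z)⁻¹ • t) * z⁻¹)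
        =o[𝓝 0] fun t : Fin n → ℂ => ‖t‖ ^ ((h : ℝ) / ((g : ℝ) + 1)) :=
  laurent_constant_coefficient_littleO_general Ω hΩ hΩ0 R hRhol hRo D hD hD0 δ u hu hu0 hδ
end
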